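/- arXiv:2410.07778 — 2 statements merged into one kernel-verified Lean document; each statement's English description precedes it below -/
import Mathlib

section
/- There is no jointly measurable process on [0,T]×Ω (with respect to B([0,T])⊗F) such that for almost every t the random variables ξ_t are pairwise independent, non-degenerate (e.g., uniformly distributed on [0,1]), in the sense that any B([0,T])⊗F-measurable process whose random variables (ξ_t) are essentially pairwise independent must be such that for Lebesgue-a.e. t, ξ_t is almost surely constant. -/
/-! Replacing `ξ` by the bounded process `X = arctan ∘ ξ`, independence makes `X_t` and `X_s`
uncorrelated for almost every pair `(t, s)`. For the centred process `Z`, Fubini gives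
`E[(∫_A Z_t dt)²] = ∫∫_{A × A} E[Z_t Z_s] ds dt = 0`, so almost surely `∫_A Z_t dt = 0` for all
`A` in a countable generating π-system (rational intervals), hence `Z(·, ω) = 0` a.e. for a.e. `ω`.
Exchanging the two almost-everywhere quantifiers (Fubini again) gives the claim. -/

open MeasureTheory ProbabilityTheory Function

theorem MeasureTheory.Integrable.ae_eq_zero_of_forall_setIntegral_isPiSystem_eq_zero
    {α E : Type*} {m : MeasurableSpace α} [NormedAddCommGroup E] [NormedSpace ℝ E] [CompleteSpace E]
    {μ : Measure α} {f : α → E} {S : Set (Set α)}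
    (h_gen : m = MeasurableSpace.generateFrom S) (h_pi : IsPiSystem S) (hf : Integrable f μ)
    (h_univ : ∫ x, f x ∂μ = 0) (hS : ∀ s ∈ S, ∫ x in s, f x ∂μ = 0) :
    f =ᵐ[μ] 0 := by
  suffices h : ∀ s, MeasurableSet s → ∫ x in s, f x ∂μ = 0 from
    hf.ae_eq_zero_of_forall_setIntegral_eq_zero fun s hs _ => h s hs
  intro s hs
  induction s, hs using MeasurableSpace.induction_on_inter h_gen h_pi with
  | empty => simp
  | basic s hs => exact hS s hs
  | compl s hs ihs => simpa [ihs, h_univ] using integral_add_compl hs hf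
  | iUnion g g_disj g_meas hg => simp [integral_iUnion g_meas g_disj hf.integrableOn, hg]

section

variable {α Ω : Type*} [MeasurableSpace α] [MeasurableSpace Ω] {μ : Measure α} {P : Measure Ω}
  [IsFiniteMeasure μ] [IsFiniteMeasure P] {Z : α → Ω → ℝ} {C : ℝ}

lemma ae_integral_eq_zero_of_ae_integral_mul_eq_zero (hZ : Measurable (uncurry Z))
    (hC : ∀ t ω, ‖Z t ω‖ ≤ C) (horth : ∀ᵐ p ∂μ.prod μ, ∫ ω, Z p.1 ω * Z p.2 ω ∂P = 0) :
    ∀ᵐ ω ∂P, ∫ t, Z t ω ∂μ = 0 := by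
  have hW : Measurable fun ω => ∫ t, Z t ω ∂μ :=
    (hZ.comp measurable_swap).stronglyMeasurable.integral_prod_right'.measurable
  have hprod : Integrable (uncurry fun ω (p : α × α) => Z p.1 ω * Z p.2 ω) (P.prod (μ.prod μ)) :=
    .of_bound ((hZ.comp (measurable_snd.fst.prodMk measurable_fst)).mul
      (hZ.comp (measurable_snd.snd.prodMk measurable_fst))).aestronglyMeasurable (C * C)
      (.of_forall fun x => by
        rw [uncurry, norm_mul]
        exact mul_le_mul (hC _ _) (hC _ _) (norm_nonneg _) ((norm_nonneg _).trans (hC x.2.1 x.1)))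
  have hsq : ∫ ω, (∫ t, Z t ω ∂μ) * (∫ t, Z t ω ∂μ) ∂P = 0 := calc
    _ = ∫ ω, ∫ p, Z p.1 ω * Z p.2 ω ∂μ.prod μ ∂P := by simp only [← integral_prod_mul]
    _ = ∫ p, ∫ ω, Z p.1 ω * Z p.2 ω ∂P ∂μ.prod μ := integral_integral_swap hprod
    _ = 0 := integral_eq_zero_of_ae horth
  have hint : Integrable (fun ω => (∫ t, Z t ω ∂μ) * (∫ t, Z t ω ∂μ)) P :=
    .of_bound (hW.mul hW).aestronglyMeasurable ((C * μ.real Set.univ) * (C * μ.real Set.univ))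
      (.of_forall fun ω => by
        have hb := norm_integral_le_of_norm_le_const (μ := μ) (.of_forall fun t => hC t ω)
        rw [norm_mul]
        exact mul_le_mul hb hb (norm_nonneg _) ((norm_nonneg _).trans hb))
  filter_upwards [(integral_eq_zero_iff_of_nonneg (fun ω => mul_self_nonneg _) hint).mp hsq]
    with ω hω
  exact mul_self_eq_zero.mp hω

theorem ae_ae_eq_zero_of_ae_ae_integral_mul_eq_zero {S : Set (Set α)} (hS : S.Countable)
    (h_gen : ‹MeasurableSpace α› = MeasurableSpace.generateFrom S) (h_pi : IsPiSystem S)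
    (hZ : Measurable (uncurry Z)) (hC : ∀ t ω, ‖Z t ω‖ ≤ C)
    (horth : ∀ᵐ t ∂μ, ∀ᵐ s ∂μ, ∫ ω, Z t ω * Z s ω ∂P = 0) :
    ∀ᵐ t ∂μ, ∀ᵐ ω ∂P, Z t ω = 0 := by
  have hcorr : Measurable fun p : α × α => ∫ ω, Z p.1 ω * Z p.2 ω ∂P :=
    ((hZ.comp (measurable_fst.fst.prodMk measurable_snd)).mul
      (hZ.comp (measurable_fst.snd.prodMk measurable_snd))).stronglyMeasurable
      |>.integral_prod_right'.measurable
  have horth_prod : ∀ᵐ p ∂μ.prod μ, ∫ ω, Z p.1 ω * Z p.2 ω ∂P = 0 :=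
    (Measure.ae_prod_iff_ae_ae (hcorr (measurableSet_singleton 0))).2 horth
  have hset : ∀ s, ∀ᵐ ω ∂P, ∫ t in s, Z t ω ∂μ = 0 := fun s =>
    ae_integral_eq_zero_of_ae_integral_mul_eq_zero hZ hC <| by
      rw [Measure.prod_restrict]
      exact ae_restrict_of_ae horth_prod
  have hpath : ∀ᵐ ω ∂P, (fun t => Z t ω) =ᵐ[μ] 0 := by
    filter_upwards [hset Set.univ, (ae_ball_iff hS).2 fun s _ => hset s] with ω h_univ h_basic
    exact (Integrable.of_bound (hZ.comp measurable_prodMk_right).aestronglyMeasurable C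
      (.of_forall fun t => hC t ω)).ae_eq_zero_of_forall_setIntegral_isPiSystem_eq_zero
      h_gen h_pi (by simpa using h_univ) h_basic
  exact (Measure.ae_ae_comm (p := fun ω t => Z t ω = 0)
    ((hZ.comp measurable_swap) (measurableSet_singleton 0))).1 hpath

theorem ae_ae_eq_integral_of_ae_ae_covariance_eq_zero {S : Set (Set α)} (hS : S.Countable)
    (h_gen : ‹MeasurableSpace α› = MeasurableSpace.generateFrom S) (h_pi : IsPiSystem S)
    {X : α → Ω → ℝ} (hX : Measurable (uncurry X)) (hC : ∀ t ω, ‖X t ω‖ ≤ C)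
    (hcov : ∀ᵐ t ∂μ, ∀ᵐ s ∂μ, cov[X t, X s; P] = 0) :
    ∀ᵐ t ∂μ, X t =ᵐ[P] fun _ => P[X t] := by
  have hmean : Measurable fun t => P[X t] :=
    hX.stronglyMeasurable.integral_prod_right'.measurable
  have hbound : ∀ t ω, ‖X t ω - P[X t]‖ ≤ C + C * P.real Set.univ := fun t ω =>
    (norm_sub_le _ _).trans
      (add_le_add (hC t ω) (norm_integral_le_of_norm_le_const (.of_forall (hC t))))
  filter_upwards [ae_ae_eq_zero_of_ae_ae_integral_mul_eq_zero hS h_gen h_pi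
    (hX.sub (hmean.comp measurable_fst)) hbound hcov] with t ht
  filter_upwards [ht] with ω hω
  exact sub_eq_zero.mp hω

end

theorem stmt0_general {Ω : Type*} [MeasurableSpace Ω] (P : Measure Ω) [IsProbabilityMeasure P]
    (T : ℝ) (ξ : ℝ → Ω → ℝ)
    (hmeas : Measurable fun p : ℝ × Ω => ξ p.1 p.2)
    (hindep : ∀ᵐ t ∂(volume.restrict (Set.Icc 0 T)),
      ∀ᵐ s ∂(volume.restrict (Set.Icc 0 T)), ProbabilityTheory.IndepFun (ξ t) (ξ s) P) :
    ∀ᵐ t ∂(volume.restrict (Set.Icc 0 T)), ∃ c : ℝ, ∀ᵐ ω ∂P, ξ t ω = c := by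
  have : IsFiniteMeasure (volume.restrict (Set.Icc 0 T)) :=
    isFiniteMeasure_restrict.2 measure_Icc_lt_top.ne
  set X : ℝ → Ω → ℝ := fun t ω => Real.arctan (ξ t ω)
  have hXb : ∀ t ω, ‖X t ω‖ ≤ Real.pi / 2 := fun t ω =>
    abs_le.2 ⟨(Real.neg_pi_div_two_lt_arctan _).le, (Real.arctan_lt_pi_div_two _).le⟩
  have hXL2 : ∀ t, MemLp (X t) 2 P := fun t =>
    .of_bound (Real.measurable_arctan.comp (hmeas.comp measurable_prodMk_left)).aestronglyMeasurable
      _ (.of_forall (hXb t))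
  have hcov : ∀ᵐ t ∂(volume.restrict (Set.Icc 0 T)),
      ∀ᵐ s ∂(volume.restrict (Set.Icc 0 T)), cov[X t, X s; P] = 0 := by
    filter_upwards [hindep] with t ht
    filter_upwards [ht] with s hts
    exact (hts.comp Real.measurable_arctan Real.measurable_arctan).covariance_eq_zero
      (hXL2 t) (hXL2 s)
  have hS : (⋃ (a : ℚ) (b : ℚ) (_ : a < b), {Set.Ioo (a : ℝ) b}).Countable :=
    Set.countable_iUnion fun _ => Set.countable_iUnion fun _ =>
      Set.countable_iUnion fun _ => Set.countable_singleton _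
  filter_upwards [ae_ae_eq_integral_of_ae_ae_covariance_eq_zero hS
    (BorelSpace.measurable_eq.trans Real.borel_eq_generateFrom_Ioo_rat) Real.isPiSystem_Ioo_rat
    (X := X) (Real.measurable_arctan.comp hmeas) hXb hcov] with t ht
  refine ⟨Real.tan P[X t], ?_⟩
  filter_upwards [ht] with ω hω
  rw [← hω, Real.tan_arctan]

/-- Any jointly measurable, essentially pairwise independent process must be
essentially degenerate: for Lebesgue-a.e. `t`, `ξ t` is a.s. constant. -/
theorem stmt0 {Ω : Type*} [MeasurableSpace Ω] (P : Measure Ω) [IsProbabilityMeasure P]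
    (T : ℝ) (hT : 0 < T) (ξ : ℝ → Ω → ℝ)
    (hmeas : Measurable fun p : ℝ × Ω => ξ p.1 p.2)
    (hindep : ∀ᵐ t ∂(volume.restrict (Set.Icc 0 T)),
      ∀ᵐ s ∂(volume.restrict (Set.Icc 0 T)), ProbabilityTheory.IndepFun (ξ t) (ξ s) P) :
    ∀ᵐ t ∂(volume.restrict (Set.Icc 0 T)), ∃ c : ℝ, ∀ᵐ ω ∂P, ξ t ω = c :=
  stmt0_general P T ξ hmeas hindep
end

section
/- Let ξ:[0,T]×Ω→ℝ be a process on a Fubini extension such that for a.e. t, ξ_t is uniformly distributed on [0,1], satisfying the exact law of large numbers: for every Borel set C⊆ℝ and every Borel set B⊆[0,T], for P-a.e. ω, ∫_B 1_{ξ_t(ω)∈C} ρ(dt) = λ([0,1]∩C)·ρ(B). Then there is a single P-null set N such that for every ω∉N, the random measure ρ̂(ω; dt,du) = δ_{ξ_t(ω)}(du)ρ(dt) restricted to B([0,T])⊗B(ℝ) coincides with the product Lebesgue measure λ_{[0,T]}⊗λ_{[0,1]}. -/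
open MeasureTheory

lemma stmt3_spanning : IsCountablySpanning (⋃ a : ℚ, {Set.Iio (a : ℝ)}) := by
  refine ⟨fun n => Set.Iio ((n : ℚ) : ℝ), fun n => Set.mem_iUnion.2 ⟨n, rfl⟩, ?_⟩
  ext x
  simp only [Set.mem_iUnion, Set.mem_Iio, Set.mem_univ, iff_true]
  obtain ⟨n, hn⟩ := exists_nat_gt x
  exact ⟨n, by push_cast; exact hn⟩

/-- Upgrading the exact law of large numbers to a single null set: outside a `P`-null
set `N`, the random measure `ρ̂(ω; dt,du) = δ_{ξ_t(ω)}(du) ρ(dt)` (the pushforward of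
`ρ` under `t ↦ (t, ξ t ω)`), restricted to the product Borel σ-field, coincides with
the product Lebesgue measure `λ_{[0,T]} ⊗ λ_{[0,1]}`.  Here `Λ` is an extension of the
Borel σ-field of `ℝ` and `ρ` restricts to Lebesgue measure on `[0,T]` on Borel sets. -/
theorem stmt3 {Ω : Type*} [MeasurableSpace Ω] (P : Measure Ω) [IsProbabilityMeasure P]
    (T : ℝ) (hT : 0 < T)
    (Λ : MeasurableSpace ℝ) (hΛ : Real.measurableSpace ≤ Λ)
    (ρ : @Measure ℝ Λ)
    (hρ : ∀ B : Set ℝ, @MeasurableSet ℝ Real.measurableSpace B →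
      ρ B = volume (B ∩ Set.Icc 0 T))
    (ξ : ℝ → Ω → ℝ)
    (hξmeas : ∀ᵐ ω ∂P, @Measurable ℝ ℝ Λ Real.measurableSpace fun t => ξ t ω)
    (hunif : ∀ᵐ t ∂(volume.restrict (Set.Icc 0 T)),
      @Measure.map Ω ℝ _ Real.measurableSpace (ξ t) P = volume.restrict (Set.Icc 0 1))
    (hELLN : ∀ B C : Set ℝ, @MeasurableSet ℝ Real.measurableSpace B →
      @MeasurableSet ℝ Real.measurableSpace C →
      ∀ᵐ ω ∂P, (∫⁻ t in B, C.indicator (fun _ => (1 : ENNReal)) (ξ t ω) ∂ρ)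
        = volume (C ∩ Set.Icc 0 1) * volume (B ∩ Set.Icc 0 T)) :
    ∃ N : Set Ω, P N = 0 ∧ ∀ ω ∉ N,
      @Measure.map ℝ (ℝ × ℝ) Λ
        (@Prod.instMeasurableSpace ℝ ℝ Real.measurableSpace Real.measurableSpace)
        (fun t => (t, ξ t ω)) ρ
        = @Measure.prod ℝ ℝ Real.measurableSpace Real.measurableSpace
            (volume.restrict (Set.Icc 0 T)) (volume.restrict (Set.Icc 0 1)) := by
  classical
  have key : ∀ᵐ ω ∂P, (@Measurable ℝ ℝ Λ Real.measurableSpace fun t => ξ t ω) ∧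
      ∀ p : ℚ × ℚ,
        (∫⁻ t in Set.Iio ((p.1 : ℝ)), (Set.Iio ((p.2 : ℝ))).indicator
            (fun _ => (1 : ENNReal)) (ξ t ω) ∂ρ)
          = volume (Set.Iio ((p.2 : ℝ)) ∩ Set.Icc 0 1)
            * volume (Set.Iio ((p.1 : ℝ)) ∩ Set.Icc 0 T) :=
    hξmeas.and (ae_all_iff.2 fun p => hELLN _ _ measurableSet_Iio measurableSet_Iio)
  have hIio : ∀ c : ℝ, MeasurableSet[Real.measurableSpace] (Set.Iio c) := by
    clear! Λ
    exact fun c => measurableSet_Iio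
  have hprod : ∀ s t : Set ℝ,
      (@Measure.prod ℝ ℝ Real.measurableSpace Real.measurableSpace
        (volume.restrict (Set.Icc 0 T)) (volume.restrict (Set.Icc 0 1))) (s ×ˢ t)
      = volume.restrict (Set.Icc 0 T) s * volume.restrict (Set.Icc 0 1) t := by
    clear! Λ
    exact fun s t => Measure.prod_prod s t
  refine ⟨_, ae_iff.mp key, fun ω hω => ?_⟩
  obtain ⟨hmeas, hE⟩ : _ ∧ _ := not_not.1 hω
  -- finiteness of ρ
  haveI : IsFiniteMeasure ρ := by
    constructor
    rw [hρ _ MeasurableSet.univ, Set.univ_inter, Real.volume_Icc]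
    exact ENNReal.ofReal_lt_top
  have hf : @Measurable ℝ (ℝ × ℝ) Λ
      (@Prod.instMeasurableSpace ℝ ℝ Real.measurableSpace Real.measurableSpace)
      (fun t => (t, ξ t ω)) :=
    Measurable.prodMk (measurable_id'' hΛ) hmeas
  haveI : IsFiniteMeasure (@Measure.map ℝ (ℝ × ℝ) Λ
      (@Prod.instMeasurableSpace ℝ ℝ Real.measurableSpace Real.measurableSpace)
      (fun t => (t, ξ t ω)) ρ) := by
    constructor
    rw [Measure.map_apply hf MeasurableSet.univ]
    exact measure_lt_top ρ _
  -- generating π-system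
  have hgen : (@Prod.instMeasurableSpace ℝ ℝ Real.measurableSpace Real.measurableSpace)
      = MeasurableSpace.generateFrom
        (Set.image2 (· ×ˢ ·) (⋃ a : ℚ, {Set.Iio (a : ℝ)}) (⋃ a : ℚ, {Set.Iio (a : ℝ)})) := by
    conv_lhs => rw [show (Real.measurableSpace) = borel ℝ from rfl,
      Real.borel_eq_generateFrom_Iio_rat]
    exact generateFrom_prod_eq stmt3_spanning stmt3_spanning
  refine ext_of_generate_finite _ hgen
    (Real.isPiSystem_Iio_rat.prod Real.isPiSystem_Iio_rat) ?_ ?_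
  · rintro _ ⟨s, hs, t, ht, rfl⟩
    simp only [Set.mem_iUnion, Set.mem_singleton_iff] at hs ht
    obtain ⟨a, rfl⟩ := hs
    obtain ⟨b, rfl⟩ := ht
    have hrect : MeasurableSet[(@Prod.instMeasurableSpace ℝ ℝ
        Real.measurableSpace Real.measurableSpace)]
        (Set.Iio ((a : ℝ)) ×ˢ Set.Iio ((b : ℝ))) :=
      (hIio _).prod (hIio _)
    rw [Measure.map_apply hf hrect, hprod,
      Measure.restrict_apply (hIio _), Measure.restrict_apply (hIio _)]
    have hpre : (fun t => (t, ξ t ω)) ⁻¹' (Set.Iio ((a : ℝ)) ×ˢ Set.Iio ((b : ℝ)))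
        = ((fun t => ξ t ω) ⁻¹' Set.Iio ((b : ℝ))) ∩ Set.Iio ((a : ℝ)) := by
      ext t
      simp [Set.mem_prod, and_comm]
    rw [hpre]
    have := hE (a, b)
    simp only at this
    rw [show (fun t => (Set.Iio ((b:ℝ))).indicator (fun _ => (1 : ENNReal)) (ξ t ω))
        = fun t => ((fun t => ξ t ω) ⁻¹' Set.Iio ((b:ℝ))).indicator
            (fun _ => (1 : ENNReal)) t from funext fun t => by
          simp [Set.indicator_apply, Set.mem_preimage]] at this
    rw [lintegral_indicator (hmeas (hIio _)), Measure.restrict_restrict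
      (hmeas (hIio _)), setLIntegral_one] at this
    rw [this, mul_comm]
  · rw [Measure.map_apply hf MeasurableSet.univ, Set.preimage_univ,
      hρ _ MeasurableSet.univ, Set.univ_inter, ← Set.univ_prod_univ, hprod,
      Measure.restrict_apply_univ, Measure.restrict_apply_univ,
      Real.volume_Icc, Real.volume_Icc]
    simp
end
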